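/- Let Σ be a finite non-empty alphabet, X ⊆ Σ* a regular language, and R ⊆ Σ* × Σ* a rational relation. Then both ⟨R⟩X := { u ∈ Σ* | ∃ v ∈ X, (u,v) ∈ R } and ⟨R⁻¹⟩X := { u ∈ Σ* | ∃ v ∈ X, (v,u) ∈ R } are regular languages over Σ. -/

import Mathlib

/-!
If the regular language `L` presents `R`, then `⟨R⟩X = p₁ (L ∩ p₂⁻¹ X)` and
`⟨R⁻¹⟩X = p₂ (L ∩ p₁⁻¹ X)`. Regular languages are closed under intersection, under inverse images
of monoid homomorphisms (the automaton for `X` reads each letter as the word it is mapped to), and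
under images of letter maps that may erase letters (an ε-NFA whose ε-moves are the erased letters).
-/

/-- A binary relation on words over `α` is rational if it is the image, under the
two projections, of a regular language over the alphabet `Option α × Option α`. -/
def IsRationalRel {α : Type} (R : Set (List α × List α)) : Prop :=
  ∃ L : Language (Option α × Option α), L.IsRegular ∧
    R = { p | ∃ z ∈ L, p = (z.filterMap Prod.fst, z.filterMap Prod.snd) }

namespace DFA

variable {α α' : Type*} {σ : Type*}

def comapFlatMap (f : α' → List α) (M : DFA α σ) : DFA α' σ where
  step s a := M.evalFrom s (f a)
  start := M.start
  accept := M.accept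

theorem evalFrom_comapFlatMap (f : α' → List α) (M : DFA α σ) (s : σ) (x : List α') :
    (M.comapFlatMap f).evalFrom s x = M.evalFrom s (x.flatMap f) := by
  induction x generalizing s with
  | nil => rfl
  | cons a x ih => rw [evalFrom_cons, ih, List.flatMap_cons, evalFrom_of_append]; rfl

theorem accepts_comapFlatMap (f : α' → List α) (M : DFA α σ) :
    (M.comapFlatMap f).accepts = (List.flatMap f) ⁻¹' M.accepts := by
  ext x
  exact Iff.of_eq (congrArg (· ∈ M.accept) (M.evalFrom_comapFlatMap f M.start x))

def filterMapεNFA (g : α → Option α') (M : DFA α σ) : εNFA α' σ where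
  step s b := {t | ∃ a, g a = b ∧ M.step s a = t}
  start := {M.start}
  accept := M.accept

theorem isPath_filterMapεNFA_iff (g : α → Option α') (M : DFA α σ) {s t : σ}
    {x : List (Option α')} :
    (M.filterMapεNFA g).IsPath s t x ↔ ∃ z : List α, z.map g = x ∧ M.evalFrom s z = t := by
  induction x generalizing s with
  | nil => simp [eq_comm]
  | cons b x ih =>
    constructor
    · rintro (_ | ⟨u, _, _, _, _, ⟨a, ha, rfl⟩, hx⟩)
      obtain ⟨z, rfl, rfl⟩ := ih.mp hx
      exact ⟨a :: z, by rw [List.map_cons, ha], rfl⟩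
    · rintro ⟨_ | ⟨a, z⟩, hz, rfl⟩
      · cases hz
      · obtain ⟨rfl, rfl⟩ := List.cons.inj hz
        exact .cons _ _ _ _ _ ⟨a, rfl, rfl⟩ (ih.mpr ⟨z, rfl, rfl⟩)

theorem accepts_filterMapεNFA (g : α → Option α') (M : DFA α σ) :
    (M.filterMapεNFA g).accepts = List.filterMap g '' M.accepts := by
  ext u
  have reduceOption_map (z : List α) : (z.map g).reduceOption = z.filterMap g := by
    rw [List.reduceOption, List.filterMap_map]; rfl
  simp only [εNFA.mem_accepts_iff_exists_path, isPath_filterMapεNFA_iff]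
  constructor
  · rintro ⟨_, _, _, rfl, ht, rfl, z, rfl, rfl⟩
    exact ⟨z, ht, (reduceOption_map z).symm⟩
  · rintro ⟨z, hz, rfl⟩
    exact ⟨_, _, _, rfl, hz, reduceOption_map z, z, rfl, rfl⟩

end DFA

namespace Language

variable {α α' : Type*}

theorem IsRegular.preimage_flatMap {L : Language α} (hL : L.IsRegular) (f : α' → List α) :
    IsRegular (List.flatMap f ⁻¹' L) := by
  obtain ⟨σ, _, M, rfl⟩ := hL
  exact ⟨σ, inferInstance, M.comapFlatMap f, M.accepts_comapFlatMap f⟩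

theorem IsRegular.preimage_filterMap {L : Language α} (hL : L.IsRegular) (g : α' → Option α) :
    IsRegular (List.filterMap g ⁻¹' L) := by
  rw [show List.filterMap g = _ from funext (List.filterMap_eq_flatMap_toList g)]
  exact hL.preimage_flatMap _

theorem IsRegular.image_filterMap {L : Language α} (hL : L.IsRegular) (g : α → Option α') :
    IsRegular (List.filterMap g '' L) := by
  obtain ⟨σ, _, M, rfl⟩ := hL
  classical
  exact ⟨Set σ, inferInstance, (M.filterMapεNFA g).toNFA.toDFA, by
    rw [NFA.toDFA_correct, εNFA.toNFA_correct, DFA.accepts_filterMapεNFA]⟩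

end Language

theorem dia_of_regular_isRegular_general {α : Type}
    (X : Language α) (hX : X.IsRegular)
    (R : Set (List α × List α)) (hR : IsRationalRel R) :
    Language.IsRegular { u : List α | ∃ v ∈ X, (u, v) ∈ R } ∧
    Language.IsRegular { u : List α | ∃ v ∈ X, (v, u) ∈ R } := by
  obtain ⟨L, hL, rfl⟩ := hR
  have image_regular (g h : Option α × Option α → Option α) :
      Language.IsRegular {u | ∃ v ∈ X, ∃ z ∈ L, u = z.filterMap g ∧ v = z.filterMap h} := by
    have hset : List.filterMap g '' (L ⊓ List.filterMap h ⁻¹' X) =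
        {u | ∃ v ∈ X, ∃ z ∈ L, u = z.filterMap g ∧ v = z.filterMap h} := by
      ext u
      constructor
      · rintro ⟨z, ⟨hz, hv⟩, rfl⟩
        exact ⟨_, hv, z, hz, rfl, rfl⟩
      · rintro ⟨_, hv, z, hz, rfl, rfl⟩
        exact ⟨z, ⟨hz, hv⟩, rfl⟩
    exact hset ▸ (hL.inf (hX.preimage_filterMap h)).image_filterMap g
  constructor
  · simpa only [Set.mem_ofPred_eq, Prod.mk.injEq] using image_regular Prod.fst Prod.snd
  · simpa only [Set.mem_ofPred_eq, Prod.mk.injEq, and_comm] using image_regular Prod.snd Prod.fst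

/-- For a finite non-empty alphabet `α`, a regular language `X` and a
rational relation `R`, both `⟨R⟩X` and `⟨R⁻¹⟩X` are regular. -/
theorem dia_of_regular_isRegular {α : Type} [Fintype α] [Nonempty α]
    (X : Language α) (hX : X.IsRegular)
    (R : Set (List α × List α)) (hR : IsRationalRel R) :
    Language.IsRegular { u : List α | ∃ v ∈ X, (u, v) ∈ R } ∧
    Language.IsRegular { u : List α | ∃ v ∈ X, (v, u) ∈ R } :=
  dia_of_regular_isRegular_general X hX R hR
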